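/- Let d ≥ 1, n = d(d+1), and let b_1, …, b_n be unit vectors in ℂ^d such that for every j ≠ k, |⟨b_j, b_k⟩|² equals either 0 or 1/d. Then the number of ordered triples (j, k, l) of pairwise distinct indices with ⟨b_j, b_k⟩ = ⟨b_k, b_l⟩ = ⟨b_l, b_j⟩ = 0 equals (d² − 1)·d·(d − 2). -/

import Mathlib

/-!
Put `Q_j = √d (b_j b_jᴴ - 1/d)`, a traceless Hermitian matrix. The angle condition makes the Gram
matrix `M = (tr (Q_j Q_k))` equal to `(d - 1) I - A`, where `A` is the adjacency matrix of the
orthogonality graph. So `M` is positive semidefinite of rank at most `d² - 1`, with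
`tr M = n (d - 1)` and `tr M² = n (d - 1)² + ∑ deg ≤ n d (d - 1)`, the inequality coming from
`1ᵀ M 1 ≥ 0`. For `n = d (d + 1)` this gives `∑_{μ ≠ 0} (μ - d)² ≤ 0` over the eigenvalues `μ` of
`M`, hence `M² = d M`, i.e. `A² = (d - 1) I + (d - 2) A`. The number of ordered triangles is then
`tr A³ = (d - 2) tr A² = n (d - 1) (d - 2)`.
-/

open Matrix Finset WithLp
open scoped InnerProductSpace ComplexOrder

namespace Matrix

variable {𝕜 ι : Type*} [RCLike 𝕜] [Fintype ι]

lemma IsHermitian.trace_mul_self [DecidableEq ι] {A : Matrix ι ι 𝕜} (hA : A.IsHermitian) :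
    (A * A).trace = ∑ i, ((hA.eigenvalues i ^ 2 : ℝ) : 𝕜) := by
  conv_lhs => rw [hA.spectral_theorem, ← map_mul, Unitary.conjStarAlgAut_apply, trace_mul_cycle,
    Unitary.coe_star_mul_self, one_mul, diagonal_mul_diagonal, trace_diagonal]
  simp [sq]

lemma PosSemidef.mul_self_eq_smul_of_trace_le [DecidableEq ι] {A : Matrix ι ι 𝕜}
    (hA : A.PosSemidef) {c : ℝ}
    (h : RCLike.re (A * A).trace + c ^ 2 * A.rank ≤ 2 * c * RCLike.re A.trace) :
    A * A = (c : 𝕜) • A := by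
  set μ := hA.isHermitian.eigenvalues
  rw [hA.isHermitian.trace_mul_self, hA.isHermitian.trace_eq_sum_eigenvalues,
    hA.isHermitian.rank_eq_card_non_zero_eigs, Fintype.card_subtype, card_filter] at h
  simp only [map_sum, RCLike.ofReal_re, Nat.cast_sum, mul_sum] at h
  have hsum : ∑ i, (if μ i = 0 then 0 else (μ i - c) ^ 2) ≤ 0 := by
    calc _ = ∑ i, (μ i ^ 2 + c ^ 2 * ((if μ i ≠ 0 then 1 else 0 : ℕ) : ℝ) - 2 * c * μ i) := by
          refine sum_congr rfl fun i _ => ?_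
          by_cases h0 : μ i = 0 <;> simp [h0]; ring
      _ ≤ 0 := by rw [sum_sub_distrib, sum_add_distrib]; linarith
  have hμ : ∀ i, μ i ^ 2 = c * μ i := by
    intro i
    have := (sum_eq_zero_iff_of_nonneg (fun i _ => by positivity)).1
      (le_antisymm hsum (sum_nonneg fun i _ => by positivity)) i (mem_univ i)
    split_ifs at this with h0
    · simp [h0]
    · nlinarith
  rw [hA.isHermitian.spectral_theorem, ← map_mul, ← map_smul, diagonal_mul_diagonal,
    ← diagonal_smul]
  congr 2
  funext i
  simp only [Function.comp_apply, Pi.smul_apply, smul_eq_mul, ← RCLike.ofReal_mul, ← sq,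
    ← RCLike.ofReal_pow]
  exact congrArg _ (hμ i)

variable {E : Type*} [NormedAddCommGroup E] [InnerProductSpace 𝕜 E] [FiniteDimensional 𝕜 E]

lemma rank_gram_le_finrank (v : ι → E) : (gram 𝕜 v).rank ≤ Module.finrank 𝕜 E := by
  rw [gram_eq_conjTranspose_mul (stdOrthonormalBasis 𝕜 E), rank_conjTranspose_mul_self]
  exact (rank_le_card_height _).trans (by simp)

lemma rank_gram_le_finrank_sub_one (v : ι → E) {u : E} (hu : u ≠ 0)
    (hv : ∀ i, ⟪u, v i⟫_𝕜 = 0) :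
    (gram 𝕜 v).rank ≤ Module.finrank 𝕜 E - 1 := by
  have hK : Module.finrank 𝕜 (𝕜 ∙ u)ᗮ = Module.finrank 𝕜 E - 1 := by
    have := (𝕜 ∙ u).finrank_add_finrank_orthogonal
    rw [finrank_span_singleton hu] at this
    omega
  have hgram : gram 𝕜 v = gram 𝕜 fun i =>
      (⟨v i, Submodule.mem_orthogonal_singleton_iff_inner_right.2 (hv i)⟩ : (𝕜 ∙ u)ᗮ) := rfl
  rw [hgram, ← hK]
  exact rank_gram_le_finrank _

lemma trace_vecMulVec_star_mul_vecMulVec_star {n : Type*} [Fintype n] (x y : n → 𝕜) :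
    (vecMulVec x (star x) * vecMulVec y (star y)).trace = (y ⬝ᵥ star x) * (x ⬝ᵥ star y) := by
  rw [vecMulVec_mul_vecMulVec, trace_vecMulVec, dotProduct_smul, smul_eq_mul,
    dotProduct_comm (star x)]

end Matrix

namespace EuclideanSpace

variable {𝕜 : Type*} [RCLike 𝕜]

lemma inner_toLp_vec_toLp_vec {m n : Type*} [Fintype m] [Fintype n] (A B : Matrix m n 𝕜) :
    ⟪toLp 2 A.vec, toLp 2 B.vec⟫_𝕜 = (Aᴴ * B).trace := by
  rw [inner_toLp_toLp, dotProduct_comm, star_vec_dotProduct_vec]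

lemma ofLp_dotProduct_star_ofLp_self {n : Type*} [Fintype n] (x : EuclideanSpace 𝕜 n) :
    ofLp x ⬝ᵥ star (ofLp x) = ((‖x‖ ^ 2 : ℝ) : 𝕜) := by
  rw [← inner_eq_star_dotProduct, inner_self_eq_norm_sq_to_K, RCLike.ofReal_pow]

end EuclideanSpace

namespace SimpleGraph

variable {V R : Type*} [Fintype V] (G : SimpleGraph V) [DecidableRel G.Adj] [CommRing R]

def orderedTriangles : Set (V × V × V) :=
  {t | G.Adj t.1 t.2.1 ∧ G.Adj t.2.1 t.2.2 ∧ G.Adj t.2.2 t.1}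

lemma natCast_ncard_orderedTriangles [DecidableEq V] :
    (G.orderedTriangles.ncard : R) = (G.adjMatrix R ^ 3).trace := by
  calc (G.orderedTriangles.ncard : R)
      = ∑ t : V × V × V, G.adjMatrix R t.1 t.2.1 * G.adjMatrix R t.2.1 t.2.2 *
          G.adjMatrix R t.2.2 t.1 := by
        rw [orderedTriangles, Set.ncard_eq_toFinset_card', Set.toFinset_ofPred, card_filter,
          Nat.cast_sum]
        simp only [adjMatrix_apply, ite_zero_mul_ite_zero, mul_one, and_assoc, Nat.cast_ite,
          Nat.cast_one, Nat.cast_zero]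
    _ = (G.adjMatrix R ^ 3).trace := by
        simp only [pow_three, trace, Matrix.diag, mul_apply, mul_sum, Fintype.sum_prod_type,
          mul_assoc]

lemma trace_adjMatrix_mul_self :
    (G.adjMatrix R * G.adjMatrix R).trace = Fintype.card G.Dart := by
  simp only [trace, Matrix.diag, adjMatrix_mul_self_apply_self]
  rw [← Nat.cast_sum, dart_card_eq_sum_degrees]

lemma trace_adjMatrix_pow_three_of_sq_eq [DecidableEq V] {a b : R}
    (h : G.adjMatrix R ^ 2 = a • 1 + b • G.adjMatrix R) :
    (G.adjMatrix R ^ 3).trace = Fintype.card V * a * b := by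
  have h2 : (G.adjMatrix R ^ 2).trace = Fintype.card V * a := by
    simp [h, trace_add, trace_smul, mul_comm]
  rw [pow_succ, h, add_mul, smul_mul_assoc, smul_mul_assoc, one_mul, ← sq, trace_add, trace_smul,
    trace_smul, trace_adjMatrix, h2, smul_eq_mul, smul_eq_mul]
  ring

end SimpleGraph

def orthogonalityGraph (𝕜 : Type*) {E ι : Type*} [RCLike 𝕜] [SeminormedAddCommGroup E]
    [InnerProductSpace 𝕜 E] (b : ι → E) : SimpleGraph ι where
  Adj j k := j ≠ k ∧ ⟪b j, b k⟫_𝕜 = 0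
  symm := ⟨fun _ _ h => ⟨h.1.symm, inner_eq_zero_symm.1 h.2⟩⟩
  loopless := ⟨fun _ h => h.1 rfl⟩

section OrthogonalityGraph

variable {𝕜 E ι : Type*} [RCLike 𝕜] [SeminormedAddCommGroup E] [InnerProductSpace 𝕜 E]

@[simp]
lemma orthogonalityGraph_adj {b : ι → E} {j k : ι} :
    (orthogonalityGraph 𝕜 b).Adj j k ↔ j ≠ k ∧ ⟪b j, b k⟫_𝕜 = 0 :=
  Iff.rfl

noncomputable instance (b : ι → E) : DecidableRel (orthogonalityGraph 𝕜 b).Adj :=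
  Classical.decRel _

end OrthogonalityGraph

section TracelessProjection

variable {𝕜 : Type*} [RCLike 𝕜] {d : ℕ}

noncomputable def tracelessProj (x : EuclideanSpace 𝕜 (Fin d)) : Matrix (Fin d) (Fin d) 𝕜 :=
  (√(d : ℝ) : 𝕜) • vecMulVec (ofLp x) (star (ofLp x)) - (√(d : ℝ) : 𝕜)⁻¹ • 1

lemma conjTranspose_tracelessProj (x : EuclideanSpace 𝕜 (Fin d)) :
    (tracelessProj x)ᴴ = tracelessProj x := by
  simp [tracelessProj, conjTranspose_sub, conjTranspose_smul]

lemma ofReal_sqrt_natCast_sq : ((√(d : ℝ) : ℝ) : 𝕜) ^ 2 = d := by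
  rw [← RCLike.ofReal_pow, Real.sq_sqrt (Nat.cast_nonneg d), RCLike.ofReal_natCast]

lemma trace_tracelessProj (hd : d ≠ 0) {x : EuclideanSpace 𝕜 (Fin d)} (hx : ‖x‖ = 1) :
    (tracelessProj x).trace = 0 := by
  have hs : (√(d : ℝ) : 𝕜) ≠ 0 := by simp [hd]
  simp only [tracelessProj, trace_sub, trace_smul, trace_vecMulVec,
    EuclideanSpace.ofLp_dotProduct_star_ofLp_self, hx, one_pow, RCLike.ofReal_one, trace_one,
    Fintype.card_fin, smul_eq_mul]
  field_simp
  rw [ofReal_sqrt_natCast_sq]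
  ring

lemma trace_tracelessProj_mul (hd : d ≠ 0) {x y : EuclideanSpace 𝕜 (Fin d)} (hx : ‖x‖ = 1)
    (hy : ‖y‖ = 1) :
    (tracelessProj x * tracelessProj y).trace = d * ‖⟪x, y⟫_𝕜‖ ^ 2 - 1 := by
  have hxy : (ofLp y ⬝ᵥ star (ofLp x)) * (ofLp x ⬝ᵥ star (ofLp y)) = ‖⟪x, y⟫_𝕜‖ ^ 2 := by
    rw [← EuclideanSpace.inner_eq_star_dotProduct, ← EuclideanSpace.inner_eq_star_dotProduct,
      ← inner_conj_symm y x, RCLike.mul_conj]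
  have hs : (√(d : ℝ) : 𝕜) ≠ 0 := by simp [hd]
  simp only [tracelessProj, sub_mul, mul_sub, smul_mul_smul_comm, trace_sub, trace_smul, mul_one,
    one_mul, trace_vecMulVec_star_mul_vecMulVec_star, trace_vecMulVec,
    EuclideanSpace.ofLp_dotProduct_star_ofLp_self, hx, hy, hxy, one_pow, RCLike.ofReal_one,
    trace_one, Fintype.card_fin, smul_eq_mul]
  field_simp
  rw [ofReal_sqrt_natCast_sq]
  ring

variable {ι : Type*} {b : ι → EuclideanSpace 𝕜 (Fin d)}

lemma gram_tracelessProj_apply (hd : d ≠ 0) (hnorm : ∀ j, ‖b j‖ = 1) (j k : ι) :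
    gram 𝕜 (fun j => toLp 2 (tracelessProj (b j)).vec) j k = d * ‖⟪b j, b k⟫_𝕜‖ ^ 2 - 1 := by
  rw [gram_apply, EuclideanSpace.inner_toLp_vec_toLp_vec, conjTranspose_tracelessProj,
    trace_tracelessProj_mul hd (hnorm j) (hnorm k)]

lemma rank_gram_tracelessProj_le [Fintype ι] (hd : d ≠ 0) (hnorm : ∀ j, ‖b j‖ = 1) :
    (gram 𝕜 (fun j => toLp 2 (tracelessProj (b j)).vec)).rank ≤ d * d - 1 := by
  have hone : toLp 2 (1 : Matrix (Fin d) (Fin d) 𝕜).vec ≠ 0 := by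
    have : NeZero d := ⟨hd⟩
    simp [vec_eq_zero_iff]
  refine (rank_gram_le_finrank_sub_one _ hone fun j => ?_).trans (by simp)
  rw [EuclideanSpace.inner_toLp_vec_toLp_vec, conjTranspose_one, one_mul,
    trace_tracelessProj hd (hnorm j)]

lemma gram_tracelessProj_eq [DecidableEq ι] (hd : d ≠ 0) (hnorm : ∀ j, ‖b j‖ = 1)
    (hangles : ∀ j k, j ≠ k → ‖⟪b j, b k⟫_𝕜‖ ^ 2 = 0 ∨ ‖⟪b j, b k⟫_𝕜‖ ^ 2 = 1 / d) :
    gram 𝕜 (fun j => toLp 2 (tracelessProj (b j)).vec) =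
      ((d : 𝕜) - 1) • 1 - (orthogonalityGraph 𝕜 b).adjMatrix 𝕜 := by
  ext j k
  rw [gram_tracelessProj_apply hd hnorm]
  by_cases hjk : j = k
  · subst hjk
    simp [inner_self_eq_norm_sq_to_K, hnorm]
  · by_cases horth : ⟪b j, b k⟫_𝕜 = 0
    · simp [SimpleGraph.adjMatrix_apply, hjk, horth]
    · have h1 : ‖⟪b j, b k⟫_𝕜‖ ^ 2 = 1 / d :=
        (hangles j k hjk).resolve_left (by simpa using horth)
      have : (‖⟪b j, b k⟫_𝕜‖ : 𝕜) ^ 2 = 1 / d := by rw [← RCLike.ofReal_pow, h1]; simp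
      simp [SimpleGraph.adjMatrix_apply, hjk, horth, this, hd]

lemma adjMatrix_orthogonalityGraph_sq [Fintype ι] [DecidableEq ι] (hd : d ≠ 0)
    (hcard : Fintype.card ι = d * (d + 1)) (hnorm : ∀ j, ‖b j‖ = 1)
    (hangles : ∀ j k, j ≠ k → ‖⟪b j, b k⟫_𝕜‖ ^ 2 = 0 ∨ ‖⟪b j, b k⟫_𝕜‖ ^ 2 = 1 / d) :
    (orthogonalityGraph 𝕜 b).adjMatrix 𝕜 ^ 2 =
      ((d : 𝕜) - 1) • 1 + ((d : 𝕜) - 2) • (orthogonalityGraph 𝕜 b).adjMatrix 𝕜 := by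
  set G := orthogonalityGraph 𝕜 b
  set M := gram 𝕜 (fun j => toLp 2 (tracelessProj (b j)).vec)
  have hM : M = ((d : 𝕜) - 1) • 1 - G.adjMatrix 𝕜 := gram_tracelessProj_eq hd hnorm hangles
  have hpsd : M.PosSemidef := posSemidef_gram 𝕜 _
  have hrank : M.rank ≤ d * d - 1 := rank_gram_tracelessProj_le hd hnorm
  have hdart : (Fintype.card G.Dart : ℝ) ≤ Fintype.card ι * (d - 1) := by
    have := hpsd.re_dotProduct_nonneg 1
    simp [hM, sub_mulVec, smul_mulVec, dotProduct_comm _ (G.adjMatrix 𝕜 *ᵥ 1),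
      ← G.natCast_card_dart_eq_dotProduct (α := 𝕜)] at this
    linarith
  have htr : RCLike.re M.trace = Fintype.card ι * ((d : ℝ) - 1) := by
    simp [hM, trace_sub, trace_smul, mul_comm]
  have htr2 : RCLike.re (M * M).trace =
      Fintype.card ι * ((d : ℝ) - 1) ^ 2 + Fintype.card G.Dart := by
    simp [hM, sub_mul, mul_sub, trace_sub, trace_smul, G.trace_adjMatrix_mul_self]
    ring
  have hsq : M * M = ((d : ℝ) : 𝕜) • M := by
    refine hpsd.mul_self_eq_smul_of_trace_le (c := d) ?_
    have hdd : 1 ≤ d * d := Nat.one_le_iff_ne_zero.2 (mul_ne_zero hd hd)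
    have hrank' : (M.rank : ℝ) + 1 ≤ d * d := by exact_mod_cast (by omega : M.rank + 1 ≤ d * d)
    rw [htr, htr2, hcard]
    rw [hcard] at hdart
    push_cast at hdart ⊢
    nlinarith [mul_le_mul_of_nonneg_left hrank' (sq_nonneg (d : ℝ))]
  rw [hM] at hsq
  simp only [sub_mul, mul_sub, smul_mul_assoc, mul_smul_comm, one_mul, mul_one,
    RCLike.ofReal_natCast] at hsq
  rw [sq]
  linear_combination (norm := module) hsq

end TracelessProjection

/-- Let `d ≥ 1`, `n = d(d+1)`, and let `b 1, …, b n` be unit vectors in `ℂ^d`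
such that for every `j ≠ k`, `|⟨b j, b k⟩|²` equals either `0` or `1/d`.  Then the number of
ordered triples of pairwise distinct, pairwise orthogonal vectors equals `(d² − 1)·d·(d − 2)`. -/
theorem card_ordered_orthogonal_triangles
    (d n : ℕ) (hd : 1 ≤ d) (hn : n = d * (d + 1))
    (b : Fin n → EuclideanSpace ℂ (Fin d))
    (hnorm : ∀ j, ‖b j‖ = 1)
    (hangles : ∀ j k, j ≠ k →
      ‖(inner ℂ (b j) (b k) : ℂ)‖ ^ 2 = 0 ∨ ‖(inner ℂ (b j) (b k) : ℂ)‖ ^ 2 = 1 / d) :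
    {t : Fin n × Fin n × Fin n |
        t.1 ≠ t.2.1 ∧ t.2.1 ≠ t.2.2 ∧ t.2.2 ≠ t.1 ∧
        (inner ℂ (b t.1) (b t.2.1) : ℂ) = 0 ∧ (inner ℂ (b t.2.1) (b t.2.2) : ℂ) = 0 ∧
        (inner ℂ (b t.2.2) (b t.1) : ℂ) = 0}.ncard = (d ^ 2 - 1) * d * (d - 2) := by
  have hsq := adjMatrix_orthogonalityGraph_sq (by omega) (by rw [Fintype.card_fin, hn]) hnorm
    hangles
  have hcount : ((orthogonalityGraph ℂ b).orderedTriangles.ncard : ℂ) =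
      n * ((d : ℂ) - 1) * ((d : ℂ) - 2) := by
    rw [SimpleGraph.natCast_ncard_orderedTriangles,
      SimpleGraph.trace_adjMatrix_pow_three_of_sq_eq _ hsq, Fintype.card_fin]
  convert_to (orthogonalityGraph ℂ b).orderedTriangles.ncard = _ using 2
  · ext t
    simp only [SimpleGraph.orderedTriangles, orthogonalityGraph_adj, Set.mem_ofPred_eq]
    tauto
  rw [← Nat.cast_inj (R := ℂ), hcount, hn]
  -- `d - 2` truncates in `ℕ` at `d = 1`, where both sides vanish
  rcases (by omega : d = 1 ∨ 2 ≤ d) with rfl | h2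
  · norm_num
  · push_cast [Nat.cast_sub h2, Nat.cast_sub (Nat.one_le_pow 2 d (by omega))]
    ring
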